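/- Let 0 < α ≤ 2/3 and consider an instance of the FSSP with two agents and a shared item set in which every item weight is at most α. Then every maximin fair solution x_MM satisfies z* − z(x_MM) ≤ (1/3) · z*. -/
import Mathlib


/-! Definitions for the Fair Subset Sum Problem (FSSP) with two agents `A` and `B`
sharing a common item set with weights `w : Fin n → ℝ`.
A solution is a pair of disjoint index subsets; feasibility means the total
selected weight does not exceed the capacity `1`. -/

/-- Total weight of the items of `S`. -/
noncomputable def sumw {n : ℕ} (w : Fin n → ℝ) (S : Finset (Fin n)) : ℝ := ∑ i ∈ S, w i

/-- A feasible solution of FSSP with a shared item set: disjoint subsets whose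
total weight is at most `1`. -/
def Feas {n : ℕ} (w : Fin n → ℝ) (x : Finset (Fin n) × Finset (Fin n)) : Prop :=
  Disjoint x.1 x.2 ∧ sumw w x.1 + sumw w x.2 ≤ 1

/-- Social utility `z(x) = a(x) + b(x)`. -/
noncomputable def zv {n : ℕ} (w : Fin n → ℝ) (x : Finset (Fin n) × Finset (Fin n)) : ℝ :=
  sumw w x.1 + sumw w x.2

/-- Pareto efficient feasible solution. -/
def Pareto {n : ℕ} (w : Fin n → ℝ) (x : Finset (Fin n) × Finset (Fin n)) : Prop :=
  Feas w x ∧ ¬ ∃ y, Feas w y ∧ sumw w x.1 ≤ sumw w y.1 ∧ sumw w x.2 ≤ sumw w y.2 ∧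
    (sumw w x.1 < sumw w y.1 ∨ sumw w x.2 < sumw w y.2)

/-- System optimum: a feasible solution maximizing the social utility. -/
def SysOpt {n : ℕ} (w : Fin n → ℝ) (x : Finset (Fin n) × Finset (Fin n)) : Prop :=
  Feas w x ∧ ∀ y, Feas w y → zv w y ≤ zv w x

/-- Maximin fair solution: Pareto efficient and maximizing `min{a(x), b(x)}`. -/
def Maximin {n : ℕ} (w : Fin n → ℝ) (x : Finset (Fin n) × Finset (Fin n)) : Prop :=
  Pareto w x ∧ ∀ y, Feas w y →
    min (sumw w y.1) (sumw w y.2) ≤ min (sumw w x.1) (sumw w x.2)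

/-- A valid FSSP instance with a shared item set in which every item weight is
nonnegative and at most `α`, and the total weight exceeds the capacity `1`. -/
def ValidInst {n : ℕ} (w : Fin n → ℝ) (α : ℝ) : Prop :=
  (∀ i, 0 ≤ w i) ∧ (∀ i, w i ≤ α) ∧ 1 < ∑ i, w i

lemma sumw_nonneg' {n : ℕ} {w : Fin n → ℝ} (hw : ∀ i, 0 ≤ w i)
    (S : Finset (Fin n)) : 0 ≤ sumw w S :=
  Finset.sum_nonneg fun i _ => hw i

lemma sumw_singleton' {n : ℕ} (w : Fin n → ℝ) (i : Fin n) : sumw w {i} = w i := by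
  simp [sumw]

/-- For `0 < α ≤ 2/3`, every maximin fair solution of an FSSP instance with a
shared item set and item weights at most `α` satisfies
`z* - z(x_MM) ≤ (1/3) · z*`. -/
theorem pof_shared_maximin_small_alpha (α : ℝ) (hα0 : 0 < α) (hα1 : α ≤ 2/3)
    {n : ℕ} (w : Fin n → ℝ) (hinst : ValidInst w α)
    (xopt : Finset (Fin n) × Finset (Fin n)) (hopt : SysOpt w xopt)
    (xMM : Finset (Fin n) × Finset (Fin n)) (hMM : Maximin w xMM) :
    zv w xopt - zv w xMM ≤ (1/3) * zv w xopt := by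
  obtain ⟨hw0, hwa, _hwsum⟩ := hinst
  obtain ⟨⟨⟨hxd, hxf⟩, hnd⟩, hmax⟩ := hMM
  obtain ⟨⟨hod, hof⟩, _homax⟩ := hopt
  by_contra hcon
  push_neg at hcon
  have ha0 : 0 ≤ sumw w xMM.1 := sumw_nonneg' hw0 _
  have hb0 : 0 ≤ sumw w xMM.2 := sumw_nonneg' hw0 _
  have hzs0 : 0 ≤ zv w xopt := add_nonneg (sumw_nonneg' hw0 _) (sumw_nonneg' hw0 _)
  have hzs1 : zv w xopt ≤ 1 := hof
  have hzMM : zv w xMM = sumw w xMM.1 + sumw w xMM.2 := rfl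
  have hzlt : sumw w xMM.1 + sumw w xMM.2 < 2/3 * zv w xopt := by linarith
  have h23 : sumw w xMM.1 + sumw w xMM.2 < 2/3 := by linarith
  have hmlt : min (sumw w xMM.1) (sumw w xMM.2) < 1/3 := by
    have h1 := min_le_left (sumw w xMM.1) (sumw w xMM.2)
    have h2 := min_le_right (sumw w xMM.1) (sumw w xMM.2)
    linarith
  set U := xopt.1 ∪ xopt.2 with hU
  have hUeq : ∑ i ∈ U, w i = zv w xopt := by
    rw [hU, Finset.sum_union hod]; rfl
  set V := U \ (xMM.1 ∪ xMM.2) with hV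
  have hVmem : ∀ j ∈ V, j ∈ U ∧ j ∉ xMM.1 ∧ j ∉ xMM.2 := by
    intro j hj
    rw [hV, Finset.mem_sdiff] at hj
    exact ⟨hj.1, fun h => hj.2 (Finset.mem_union_left _ h),
      fun h => hj.2 (Finset.mem_union_right _ h)⟩
  -- Pareto move 1: add an unused positive item to side 1
  have key1 : ∀ j, j ∉ xMM.1 → j ∉ xMM.2 → 0 < w j →
      1 < sumw w xMM.1 + sumw w xMM.2 + w j := by
    intro j hj1 hj2 hwj
    by_contra hle
    push_neg at hle
    have hins : sumw w (insert j xMM.1) = w j + sumw w xMM.1 := by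
      rw [sumw, sumw, Finset.sum_insert hj1]
    refine hnd ⟨(insert j xMM.1, xMM.2), ⟨?_, ?_⟩, ?_, le_rfl, Or.inl ?_⟩
    · exact Finset.disjoint_insert_left.mpr ⟨hj2, hxd⟩
    · show sumw w (insert j xMM.1) + sumw w xMM.2 ≤ 1
      rw [hins]; linarith
    · show sumw w xMM.1 ≤ sumw w (insert j xMM.1)
      rw [hins]; linarith
    · show sumw w xMM.1 < sumw w (insert j xMM.1)
      rw [hins]; linarith
  -- Pareto move 2: replace side 1 by a big unused item
  have key2 : ∀ j, j ∉ xMM.1 → j ∉ xMM.2 → sumw w xMM.1 < w j →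
      1 < w j + sumw w xMM.2 := by
    intro j hj1 hj2 hja
    by_contra hle
    push_neg at hle
    refine hnd ⟨({j}, xMM.2), ⟨?_, ?_⟩, ?_, le_rfl, Or.inl ?_⟩
    · exact Finset.disjoint_singleton_left.mpr hj2
    · show sumw w {j} + sumw w xMM.2 ≤ 1
      rw [sumw_singleton']; linarith
    · show sumw w xMM.1 ≤ sumw w {j}
      rw [sumw_singleton']; linarith
    · show sumw w xMM.1 < sumw w {j}
      rw [sumw_singleton']; linarith
  -- Pareto move 3: replace side 2 by a big unused item
  have key3 : ∀ j, j ∉ xMM.1 → j ∉ xMM.2 → sumw w xMM.2 < w j →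
      1 < sumw w xMM.1 + w j := by
    intro j hj1 hj2 hjb
    by_contra hle
    push_neg at hle
    refine hnd ⟨(xMM.1, {j}), ⟨?_, ?_⟩, le_rfl, ?_, Or.inr ?_⟩
    · exact Finset.disjoint_singleton_right.mpr hj1
    · show sumw w xMM.1 + sumw w {j} ≤ 1
      rw [sumw_singleton']; linarith
    · show sumw w xMM.2 ≤ sumw w {j}
      rw [sumw_singleton']; linarith
    · show sumw w xMM.2 < sumw w {j}
      rw [sumw_singleton']; linarith
  -- the part of the optimum inside the maximin solution weighs at most z(xMM)
  have hIle : ∑ i ∈ U ∩ (xMM.1 ∪ xMM.2), w i ≤ sumw w xMM.1 + sumw w xMM.2 := by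
    have h1 : ∑ i ∈ U ∩ (xMM.1 ∪ xMM.2), w i ≤ ∑ i ∈ xMM.1 ∪ xMM.2, w i :=
      Finset.sum_le_sum_of_subset_of_nonneg Finset.inter_subset_right (fun i _ _ => hw0 i)
    have h2 : ∑ i ∈ xMM.1 ∪ xMM.2, w i = sumw w xMM.1 + sumw w xMM.2 := by
      rw [Finset.sum_union hxd]; rfl
    linarith
  have hsplit : ∑ i ∈ U ∩ (xMM.1 ∪ xMM.2), w i + ∑ i ∈ V, w i = zv w xopt := by
    rw [hV, Finset.sum_inter_add_sum_sdiff, hUeq]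
  by_cases hP : ∀ j ∈ V, w j ≤ 0
  · -- no unused positive item inside the optimum: z* ≤ z(xMM), contradiction
    have hV0 : ∑ i ∈ V, w i = 0 :=
      Finset.sum_eq_zero fun i hi => le_antisymm (hP i hi) (hw0 i)
    linarith
  · push_neg at hP
    obtain ⟨j, hjV, hwj⟩ := hP
    obtain ⟨hjU, hj1, hj2⟩ := hVmem j hjV
    have h1j := key1 j hj1 hj2 hwj
    have hwja : w j ≤ α := hwa j
    have h13j : 1/3 < w j := by linarith
    by_cases hex : ∃ k ∈ V, 0 < w k ∧ k ≠ j
    · -- two unused positive items inside the optimum: both fit, great for maximin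
      obtain ⟨k, hkV, hwk, hkj⟩ := hex
      obtain ⟨hkU, hk1, hk2⟩ := hVmem k hkV
      have h1k := key1 k hk1 hk2 hwk
      have h13k : 1/3 < w k := by linarith [hwa k]
      have hpair : ∑ i ∈ ({j, k} : Finset (Fin n)), w i = w j + w k :=
        Finset.sum_pair (Ne.symm hkj)
      have hsub : ({j, k} : Finset (Fin n)) ⊆ U :=
        Finset.insert_subset_iff.mpr ⟨hjU, Finset.singleton_subset_iff.mpr hkU⟩
      have hjk : w j + w k ≤ 1 := by
        have := Finset.sum_le_sum_of_subset_of_nonneg hsub (fun i _ _ => hw0 i)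
        rw [hpair, hUeq] at this
        linarith
      have hfeas : Feas w (({j} : Finset (Fin n)), ({k} : Finset (Fin n))) := by
        refine ⟨Finset.disjoint_singleton_left.mpr ?_, ?_⟩
        · simp [Ne.symm hkj]
        · show sumw w {j} + sumw w {k} ≤ 1
          rw [sumw_singleton', sumw_singleton']; exact hjk
      have hmm : min (sumw w ({j} : Finset (Fin n))) (sumw w ({k} : Finset (Fin n)))
          ≤ min (sumw w xMM.1) (sumw w xMM.2) := hmax _ hfeas
      rw [sumw_singleton', sumw_singleton'] at hmm
      have hmin : 1/3 < min (w j) (w k) := lt_min h13j h13k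
      linarith
    · -- exactly one unused positive item inside the optimum
      push_neg at hex
      have hVsum : ∑ i ∈ V, w i = w j := by
        have hz : ∀ i ∈ V.erase j, w i = 0 := by
          intro i hi
          have hne := Finset.ne_of_mem_erase hi
          have hiV := Finset.mem_of_mem_erase hi
          by_contra h0
          exact hne (hex i hiV (lt_of_le_of_ne (hw0 i) (Ne.symm h0)))
        have h1 : ∑ i ∈ V.erase j, w i + w j = ∑ i ∈ V, w i :=
          Finset.sum_erase_add V w hjV
        have h2 : ∑ i ∈ V.erase j, w i = 0 := Finset.sum_eq_zero hz
        linarith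
      have hEsum : ∑ i ∈ U.erase j, w i + w j = ∑ i ∈ U, w i :=
        Finset.sum_erase_add U w hjU
      have hE0 : 0 ≤ sumw w (U.erase j) := sumw_nonneg' hw0 _
      have hEeq : sumw w (U.erase j) + w j = zv w xopt := by
        rw [← hUeq]; exact hEsum
      have hfeas2 : Feas w (({j} : Finset (Fin n)), U.erase j) := by
        refine ⟨Finset.disjoint_singleton_left.mpr (Finset.notMem_erase j U), ?_⟩
        show sumw w {j} + sumw w (U.erase j) ≤ 1
        rw [sumw_singleton']
        linarith
      have hm2 : min (sumw w ({j} : Finset (Fin n))) (sumw w (U.erase j))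
          ≤ min (sumw w xMM.1) (sumw w xMM.2) := hmax _ hfeas2
      rw [sumw_singleton'] at hm2
      have hEle : sumw w (U.erase j) ≤ min (sumw w xMM.1) (sumw w xMM.2) := by
        rcases le_total (sumw w (U.erase j)) (w j) with h | h
        · rwa [min_eq_right h] at hm2
        · rw [min_eq_left h] at hm2
          linarith
      have hEa : sumw w (U.erase j) ≤ sumw w xMM.1 :=
        le_trans hEle (min_le_left _ _)
      have hEb : sumw w (U.erase j) ≤ sumw w xMM.2 :=
        le_trans hEle (min_le_right _ _)
      by_cases hja : w j ≤ sumw w xMM.1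
      · -- side 1 covers w j, side 2 covers the rest of the optimum: z ≥ z*
        linarith
      · by_cases hjb : w j ≤ sumw w xMM.2
        · linarith
        · push_neg at hja hjb
          have h2 := key2 j hj1 hj2 hja
          have h3 := key3 j hj1 hj2 hjb
          have hmin : (1:ℝ)/3 < min (sumw w xMM.1) (sumw w xMM.2) :=
            lt_min (by linarith) (by linarith)
          linarith
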